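/- If (n_1,...,n_k) and (p_1,...,p_k) are tuples of positive integers such that ∏_{i=1}^k (λ - n_i + 2) - Σ_{i=1}^k n_i ∏_{j≠i} (λ - n_j + 2) = ∏_{i=1}^k (λ - p_i + 2) - Σ_{i=1}^k p_i ∏_{j≠i} (λ - p_j + 2) as polynomials in λ, then (p_1,...,p_k) is a permutation of (n_1,...,n_k). -/
import Mathlib


open Polynomial Finset

/-- The polynomial `g(λ) = ∏ (λ - nᵢ + 2) - Σ nᵢ ∏_{j≠i} (λ - nⱼ + 2)`. -/
noncomputable def gPoly {k : ℕ} (n : Fin k → ℝ) : Polynomial ℝ :=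
  ∏ i, (X - C (n i - 2)) - ∑ i, C (n i) * ∏ j ∈ univ.erase i, (X - C (n j - 2))

lemma deriv_prod_linear {k : ℕ} (a : Fin k → ℝ) :
    derivative (∏ i, (X - C (a i))) = ∑ i, ∏ j ∈ univ.erase i, (X - C (a j)) := by
  rw [Finset.prod_eq_multiset_prod, derivative_prod, Finset.sum_eq_multiset_sum]
  congr 1
  apply Multiset.map_congr rfl
  intro i _
  rw [derivative_sub, derivative_X, derivative_C, sub_zero, mul_one,
    ← Finset.erase_val, ← Finset.prod_eq_multiset_prod]

lemma gPoly_eq {k : ℕ} (n : Fin k → ℝ) :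
    gPoly n = C ((k : ℝ) + 1) * ∏ i, (X - C (n i - 2))
      - (X + C 2) * derivative (∏ i, (X - C (n i - 2))) := by
  have key : ∑ i, C (n i) * ∏ j ∈ univ.erase i, (X - C (n j - 2))
      = (X + C 2) * derivative (∏ i, (X - C (n i - 2)))
        - C (k : ℝ) * ∏ i, (X - C (n i - 2)) := by
    rw [deriv_prod_linear (fun i => n i - 2), Finset.mul_sum]
    have : C (k : ℝ) * ∏ i, (X - C (n i - 2))
        = ∑ _i : Fin k, ∏ i, (X - C (n i - 2)) := by
      rw [Finset.sum_const, card_univ, Fintype.card_fin, nsmul_eq_mul,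
        Polynomial.C_eq_natCast]
    rw [this, ← Finset.sum_sub_distrib]
    refine Finset.sum_congr rfl fun i _ => ?_
    have hm : (X - C (n i - 2)) * ∏ j ∈ univ.erase i, (X - C (n j - 2))
        = ∏ i, (X - C (n i - 2)) :=
      Finset.mul_prod_erase univ (fun j => X - C (n j - 2)) (mem_univ i)
    rw [← hm, C_sub]
    ring
  rw [gPoly, key]
  generalize (∏ i, (X - C (n i - 2)) : ℝ[X]) = h
  generalize derivative h = hd
  rw [C_add, C_1]
  ring

lemma inj_step {k : ℕ} {h₁ h₂ : ℝ[X]} (m1 : h₁.Monic) (m2 : h₂.Monic)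
    (d1 : h₁.natDegree = k) (d2 : h₂.natDegree = k)
    (heq : C ((k:ℝ)+1) * h₁ - (X + C 2) * derivative h₁
         = C ((k:ℝ)+1) * h₂ - (X + C 2) * derivative h₂) : h₁ = h₂ := by
  by_contra hne
  set d := h₁ - h₂ with hd
  have hdne : d ≠ 0 := sub_ne_zero.mpr hne
  have E : C ((k:ℝ)+1) * d = (X + C 2) * derivative d := by
    rw [hd, derivative_sub]
    linear_combination heq
  have hdeg : d.degree < h₁.degree := by
    refine degree_sub_lt ?_ m1.ne_zero ?_
    · rw [degree_eq_natDegree m1.ne_zero, degree_eq_natDegree m2.ne_zero, d1, d2]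
    · rw [m1.leadingCoeff, m2.leadingCoeff]
  have hmlt : d.natDegree < k := by
    have := (natDegree_lt_iff_degree_lt hdne).mpr
      (by rwa [degree_eq_natDegree m1.ne_zero, d1] at hdeg)
    exact_mod_cast this
  have hc : d.coeff d.natDegree ≠ 0 := leadingCoeff_ne_zero.mpr hdne
  rcases Nat.eq_zero_or_pos d.natDegree with hm0 | hmpos
  · have hC : d = C (d.coeff 0) := eq_C_of_natDegree_eq_zero hm0
    rw [hm0] at hc
    rw [hC, derivative_C, mul_zero, ← C_mul, C_eq_zero] at E
    have hk1 : (k:ℝ) + 1 ≠ 0 := by positivity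
    exact hc ((mul_eq_zero.mp E).resolve_left hk1)
  · obtain ⟨m', hm'⟩ : ∃ m', d.natDegree = m' + 1 :=
      ⟨d.natDegree - 1, (Nat.succ_pred_eq_of_pos hmpos).symm⟩
    rw [hm'] at hc hmlt
    have hcoeff := congrArg (fun q => q.coeff (m' + 1)) E
    simp only [coeff_C_mul, add_mul, coeff_add, coeff_X_mul, coeff_derivative] at hcoeff
    have hz : d.coeff (m' + 1 + 1) = 0 :=
      coeff_eq_zero_of_natDegree_lt (by omega)
    rw [hz] at hcoeff
    have h2 : ((k:ℝ)+1) * d.coeff (m'+1) = ((m'+1 : ℕ):ℝ) * d.coeff (m'+1) := by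
      push_cast
      push_cast at hcoeff
      linarith [hcoeff]
    have h3 : ((k:ℝ)+1) = ((m'+1 : ℕ):ℝ) := mul_right_cancel₀ hc h2
    have : (k + 1 : ℕ) = m' + 1 := by exact_mod_cast h3
    omega

lemma exists_perm_of_map_eq {k : ℕ} {α : Type*} [DecidableEq α] {f g : Fin k → α}
    (h : Multiset.map g univ.val = Multiset.map f univ.val) :
    ∃ σ : Equiv.Perm (Fin k), ∀ i, g i = f (σ i) := by
  have hcard : ∀ a, Fintype.card {i // g i = a} = Fintype.card {i // f i = a} := by
    intro a
    have key : ∀ (u : Fin k → α), Fintype.card {i // u i = a}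
        = Multiset.count a (Multiset.map u univ.val) := by
      intro u
      rw [Multiset.count_map, Fintype.card_subtype]
      rw [Finset.card_def, Finset.filter_val]
      congr 1
      apply Multiset.filter_congr
      intro i _
      exact ⟨fun h' => h'.symm, fun h' => h'.symm⟩
    rw [key, key, h]
  classical
  let e : ∀ a, {i // g i = a} ≃ {i // f i = a} := fun a => Fintype.equivOfCardEq (hcard a)
  refine ⟨(Equiv.sigmaFiberEquiv g).symm.trans
    ((Equiv.sigmaCongrRight e).trans (Equiv.sigmaFiberEquiv f)), fun i => ?_⟩
  simp only [Equiv.trans_apply, Equiv.sigmaFiberEquiv, Equiv.coe_fn_symm_mk,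
    Equiv.sigmaCongrRight_apply, Equiv.coe_fn_mk, Sigma.map]
  exact ((e (g i)) ⟨i, rfl⟩).2.symm

lemma prod_linear_eq_multiset {k : ℕ} (a : Fin k → ℝ) :
    (∏ i, (X - C (a i)) : ℝ[X])
      = (Multiset.map (fun x => X - C x) (Multiset.map a univ.val)).prod := by
  rw [Multiset.map_map, Finset.prod_eq_multiset_prod]
  rfl

/-- If the polynomials `g` associated to two tuples of positive integers coincide,
then the tuples are permutations of each other. -/
theorem gPoly_eq_implies_perm (k : ℕ) (n p : Fin k → ℕ)
    (hn : ∀ i, 0 < n i) (hp : ∀ i, 0 < p i)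
    (h : gPoly (fun i => (n i : ℝ)) = gPoly (fun i => (p i : ℝ))) :
    ∃ σ : Equiv.Perm (Fin k), ∀ i, p i = n (σ i) := by
  rw [gPoly_eq, gPoly_eq] at h
  have monic1 : (∏ i, (X - C ((n i : ℝ) - 2)) : ℝ[X]).Monic :=
    monic_prod_of_monic _ _ fun i _ => monic_X_sub_C _
  have monic2 : (∏ i, (X - C ((p i : ℝ) - 2)) : ℝ[X]).Monic :=
    monic_prod_of_monic _ _ fun i _ => monic_X_sub_C _
  have deg1 : (∏ i, (X - C ((n i : ℝ) - 2)) : ℝ[X]).natDegree = k := by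
    rw [natDegree_prod_of_monic _ _ fun i _ => monic_X_sub_C _]
    simp only [natDegree_X_sub_C, Finset.sum_const, smul_eq_mul, mul_one,
      card_univ, Fintype.card_fin]
  have deg2 : (∏ i, (X - C ((p i : ℝ) - 2)) : ℝ[X]).natDegree = k := by
    rw [natDegree_prod_of_monic _ _ fun i _ => monic_X_sub_C _]
    simp only [natDegree_X_sub_C, Finset.sum_const, smul_eq_mul, mul_one,
      card_univ, Fintype.card_fin]
  have hprod : (∏ i, (X - C ((n i : ℝ) - 2)) : ℝ[X])
      = ∏ i, (X - C ((p i : ℝ) - 2)) := inj_step monic1 monic2 deg1 deg2 h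
  -- multisets of roots coincide
  have hroots : Multiset.map (fun i => (n i : ℝ) - 2) univ.val
      = Multiset.map (fun i => (p i : ℝ) - 2) univ.val := by
    have h1 := congrArg Polynomial.roots
      ((prod_linear_eq_multiset (fun i => (n i : ℝ) - 2)).symm.trans
        (hprod.trans (prod_linear_eq_multiset (fun i => (p i : ℝ) - 2))))
    rwa [roots_multiset_prod_X_sub_C, roots_multiset_prod_X_sub_C] at h1
  have hcast : Multiset.map (fun i => (n i : ℝ)) univ.val
      = Multiset.map (fun i => (p i : ℝ)) univ.val := by
    have := congrArg (Multiset.map (fun x : ℝ => x + 2)) hroots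
    rw [Multiset.map_map, Multiset.map_map] at this
    simpa using this
  have hnat : Multiset.map p univ.val = Multiset.map n univ.val := by
    apply Multiset.map_injective (f := (Nat.cast : ℕ → ℝ)) Nat.cast_injective
    rw [Multiset.map_map, Multiset.map_map]
    exact hcast.symm
  exact exists_perm_of_map_eq hnat
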